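/- Let 1 ≤ k < n with BWT[k] = BWT[k+1]. Then SA[k] > 1, SA[k+1] > 1, and LF(k+1) = LF(k) + 1; equivalently, the suffixes T[SA[k]−1..n] and T[SA[k+1]−1..n] are lexicographically consecutive among the suffixes of T, with the former smaller. -/

import Mathlib

variable {α : Type*} [LinearOrder α]

/-- The suffix `T[p..n]` of a 1-indexed string `T[1..n]`, as a list. -/
def sfx (T : ℕ → α) (n p : ℕ) : List α :=
  (List.range (n + 1 - p)).map (fun d => T (p + d))

/-- The Burrows–Wheeler transform determined by the text `T`, its suffix array `SA`,
and the end-of-string character `dollar`:  `BWT[i] = T[SA[i]-1]` if `SA[i] > 1`,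
and `BWT[i] = $` if `SA[i] = 1`. -/
def bwt (T : ℕ → α) (SA : ℕ → ℕ) (dollar : α) (i : ℕ) : α :=
  if SA i = 1 then dollar else T (SA i - 1)

/-!
Prepending the common character `c = BWT[k] = BWT[k+1]` to the consecutive suffixes
`T[SA[k]..n] < T[SA[k+1]..n]` gives `T[SA[k]-1..n] < T[SA[k+1]-1..n]`. A suffix strictly between
these two starts with `c` as well, so deleting that `c` yields a suffix strictly between
`T[SA[k]..n]` and `T[SA[k+1]..n]`, which cannot exist. That the characters `BWT[k]` and `BWT[k+1]`
are not `$` follows since `$` occurs in the BWT only once, at the row with `SA = 1`.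
-/

theorem List.eq_cons_of_cons_lt_of_lt_cons {c : α} {x y z : List α}
    (hxy : c :: x < y) (hyz : y < c :: z) : ∃ y', y = c :: y' ∧ x < y' ∧ y' < z := by
  obtain _ | ⟨d, y'⟩ := y
  · exact absurd hxy (List.not_lt_nil _)
  · obtain rfl : d = c :=
      le_antisymm (List.head_le_of_lt hyz) (List.head_le_of_lt hxy)
    exact ⟨y', rfl, List.cons_lt_cons_self.mp hxy, List.cons_lt_cons_self.mp hyz⟩

theorem sfx_eq_cons {β : Type*} (T : ℕ → β) {n p : ℕ} (hp : p ≤ n) :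
    sfx T n p = T p :: sfx T n (p + 1) := by
  rw [sfx, sfx, show n + 1 - p = n + 1 - (p + 1) + 1 by omega, List.range_succ_eq_map,
    List.map_cons, List.map_map]
  congr 1
  exact List.map_congr_left fun d _ => congrArg T (by omega)

theorem sfx_eq_nil {β : Type*} (T : ℕ → β) {n p : ℕ} (hp : n < p) : sfx T n p = [] := by
  simp [sfx, show n + 1 - p = 0 by omega]

theorem sfx_sub_one_eq_cons {β : Type*} (T : ℕ → β) {n p : ℕ} (hp₁ : 1 ≤ p) (hp₂ : p ≤ n + 1) :
    sfx T n (p - 1) = T (p - 1) :: sfx T n p := by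
  rw [sfx_eq_cons T (by omega), Nat.sub_add_cancel hp₁]

theorem bwt_eq_dollar_iff {T : ℕ → α} {SA : ℕ → ℕ} {dollar : α} {n i : ℕ}
    (hdollar : ∀ p, 1 ≤ p → p < n → dollar < T p) (hSA₁ : 1 ≤ SA i) (hSA₂ : SA i ≤ n) :
    bwt T SA dollar i = dollar ↔ SA i = 1 := by
  unfold bwt
  split_ifs with h
  · simp [h]
  · simpa [h] using (hdollar (SA i - 1) (by omega) (by omega)).ne'

theorem one_lt_sa_of_bwt_eq {T : ℕ → α} {SA : ℕ → ℕ} {dollar : α} {n i j : ℕ}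
    (hdollar : ∀ p, 1 ≤ p → p < n → dollar < T p) (hi₁ : 1 ≤ SA i) (hi₂ : SA i ≤ n)
    (hj₁ : 1 ≤ SA j) (hj₂ : SA j ≤ n) (hne : SA i ≠ SA j)
    (heq : bwt T SA dollar i = bwt T SA dollar j) : 1 < SA i := by
  by_contra h
  have hi : SA i = 1 := by omega
  have hj : SA j = 1 :=
    (bwt_eq_dollar_iff hdollar hj₁ hj₂).mp (heq ▸ (bwt_eq_dollar_iff hdollar hi₁ hi₂).mpr hi)
  exact hne (hi.trans hj.symm)

section SuffixArray

variable {T : ℕ → α} {n : ℕ} {SA ISA : ℕ → ℕ}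

theorem not_sfx_between_consecutive
    (hmono : StrictMonoOn (fun i => sfx T n (SA i)) (Set.Icc 1 n))
    (hISAran : ∀ p, 1 ≤ p → p ≤ n → 1 ≤ ISA p ∧ ISA p ≤ n ∧ SA (ISA p) = p)
    {k p : ℕ} (hk₁ : 1 ≤ k) (hk₂ : k < n) (hp : 1 ≤ p)
    (hlo : sfx T n (SA k) < sfx T n p) (hhi : sfx T n p < sfx T n (SA (k + 1))) : False := by
  rcases lt_or_ge n p with hpn | hpn
  · exact List.not_lt_nil _ (sfx_eq_nil T hpn ▸ hlo)
  obtain ⟨hm₁, hm₂, hm⟩ := hISAran p hp hpn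
  rw [← hm] at hlo hhi
  have hkm : k < ISA p :=
    (hmono.lt_iff_lt ⟨hk₁, hk₂.le⟩ ⟨hm₁, hm₂⟩).mp hlo
  have hmk : ISA p < k + 1 :=
    (hmono.lt_iff_lt ⟨hm₁, hm₂⟩ ⟨by omega, hk₂⟩).mp hhi
  omega

theorem isa_sub_one_succ_of_consecutive
    (hmono : StrictMonoOn (fun i => sfx T n (SA i)) (Set.Icc 1 n))
    (hISAran : ∀ p, 1 ≤ p → p ≤ n → 1 ≤ ISA p ∧ ISA p ≤ n ∧ SA (ISA p) = p)
    {k : ℕ} (hk₁ : 1 ≤ k) (hk₂ : k < n)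
    (ha : 1 < SA k) (hb : 1 < SA (k + 1)) (hSAk : SA k ≤ n) (hSAk' : SA (k + 1) ≤ n)
    (hc : T (SA k - 1) = T (SA (k + 1) - 1)) :
    ISA (SA (k + 1) - 1) = ISA (SA k - 1) + 1 := by
  set c := T (SA k - 1)
  obtain ⟨hi₁, hi₂, hi⟩ := hISAran (SA k - 1) (by omega) (by omega)
  obtain ⟨hj₁, hj₂, hj⟩ := hISAran (SA (k + 1) - 1) (by omega) (by omega)
  have hA : sfx T n (SA (ISA (SA k - 1))) = c :: sfx T n (SA k) := by
    rw [hi, sfx_sub_one_eq_cons T (by omega) (by omega)]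
  have hB : sfx T n (SA (ISA (SA (k + 1) - 1))) = c :: sfx T n (SA (k + 1)) := by
    rw [hj, sfx_sub_one_eq_cons T (by omega) (by omega), hc]
  have hsucc : sfx T n (SA k) < sfx T n (SA (k + 1)) :=
    hmono ⟨hk₁, hk₂.le⟩ ⟨by omega, hk₂⟩ (lt_add_one k)
  have hij : ISA (SA k - 1) < ISA (SA (k + 1) - 1) := by
    refine (hmono.lt_iff_lt ⟨hi₁, hi₂⟩ ⟨hj₁, hj₂⟩).mp ?_
    simpa only [hA, hB] using List.cons_lt_cons_self.mpr hsucc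
  by_contra hne
  set m := ISA (SA k - 1) + 1
  have hm : m ∈ Set.Icc 1 n := ⟨by omega, by omega⟩
  have hlo : c :: sfx T n (SA k) < sfx T n (SA m) :=
    hA ▸ hmono ⟨hi₁, hi₂⟩ hm (lt_add_one _)
  have hhi : sfx T n (SA m) < c :: sfx T n (SA (k + 1)) :=
    hB ▸ hmono hm ⟨hj₁, hj₂⟩ (by omega)
  obtain ⟨y, hy, hly, hyh⟩ := List.eq_cons_of_cons_lt_of_lt_cons hlo hhi
  have hq : SA m ≤ n := by
    by_contra h
    simp [sfx_eq_nil T (not_le.mp h)] at hy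
  obtain rfl : sfx T n (SA m + 1) = y :=
    (List.cons_eq_cons.mp ((sfx_eq_cons T hq).symm.trans hy)).2
  exact not_sfx_between_consecutive hmono hISAran hk₁ hk₂ (by omega) hly hyh

end SuffixArray

theorem statement4_general
    (n : ℕ) (T : ℕ → α) (dollar : α) (SA : ℕ → ℕ)
    -- `T[1..n]` is a string of length `n ≥ 1` ending with `$`,
    -- which is smaller than every other character and occurs only at position `n`
    (hdollar : ∀ p, 1 ≤ p → p < n → dollar < T p)
    -- `SA` is a permutation of `{1,...,n}` sorting the suffixes lexicographically
    (hSAran : ∀ i, 1 ≤ i → i ≤ n → 1 ≤ SA i ∧ SA i ≤ n)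
    (hSAmono : ∀ i j, 1 ≤ i → i < j → j ≤ n → sfx T n (SA i) < sfx T n (SA j))
    -- `ISA` is the inverse permutation of `SA`
    (ISA : ℕ → ℕ)
    (hISAran : ∀ p, 1 ≤ p → p ≤ n → 1 ≤ ISA p ∧ ISA p ≤ n ∧ SA (ISA p) = p)
    (k : ℕ) (hk1 : 1 ≤ k) (hk2 : k < n)
    (heq : bwt T SA dollar k = bwt T SA dollar (k + 1)) :
    1 < SA k ∧ 1 < SA (k + 1) ∧
    ISA (SA (k + 1) - 1) = ISA (SA k - 1) + 1 := by
  have hmono : StrictMonoOn (fun i => sfx T n (SA i)) (Set.Icc 1 n) :=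
    fun i hi j hj hij => hSAmono i j hi.1 hij hj.2
  obtain ⟨ha₁, ha₂⟩ := hSAran k hk1 hk2.le
  obtain ⟨hb₁, hb₂⟩ := hSAran (k + 1) (by omega) hk2
  have hne : SA k ≠ SA (k + 1) := fun h =>
    (hmono ⟨hk1, hk2.le⟩ ⟨by omega, hk2⟩ (lt_add_one k)).ne (congrArg (sfx T n) h)
  have ha : 1 < SA k := one_lt_sa_of_bwt_eq hdollar ha₁ ha₂ hb₁ hb₂ hne heq
  have hb : 1 < SA (k + 1) := one_lt_sa_of_bwt_eq hdollar hb₁ hb₂ ha₁ ha₂ hne.symm heq.symm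
  have hc : T (SA k - 1) = T (SA (k + 1) - 1) := by
    simpa [bwt, ha.ne', hb.ne'] using heq
  exact ⟨ha, hb, isa_sub_one_succ_of_consecutive hmono hISAran hk1 hk2 ha hb ha₂ hb₂ hc⟩

/-- If `BWT[k] = BWT[k+1]` (for `1 ≤ k < n`) then `SA[k] > 1`,
`SA[k+1] > 1`, and `LF(k+1) = LF(k) + 1`; i.e. the suffixes `T[SA[k]-1..n]` and
`T[SA[k+1]-1..n]` are lexicographically consecutive, the former smaller. -/
theorem statement4
    (n : ℕ) (T : ℕ → α) (dollar : α) (SA : ℕ → ℕ)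
    -- `T[1..n]` is a string of length `n ≥ 1` ending with `$`,
    -- which is smaller than every other character and occurs only at position `n`
    (hn : 1 ≤ n) (hTn : T n = dollar)
    (hdollar : ∀ p, 1 ≤ p → p < n → dollar < T p)
    -- `SA` is a permutation of `{1,...,n}` sorting the suffixes lexicographically
    (hSAran : ∀ i, 1 ≤ i → i ≤ n → 1 ≤ SA i ∧ SA i ≤ n)
    (hSAsurj : ∀ p, 1 ≤ p → p ≤ n → ∃ i, 1 ≤ i ∧ i ≤ n ∧ SA i = p)
    (hSAmono : ∀ i j, 1 ≤ i → i < j → j ≤ n → sfx T n (SA i) < sfx T n (SA j))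
    -- `ISA` is the inverse permutation of `SA`
    (ISA : ℕ → ℕ)
    (hISA : ∀ i, 1 ≤ i → i ≤ n → ISA (SA i) = i)
    (hISAran : ∀ p, 1 ≤ p → p ≤ n → 1 ≤ ISA p ∧ ISA p ≤ n ∧ SA (ISA p) = p)
    (k : ℕ) (hk1 : 1 ≤ k) (hk2 : k < n)
    (heq : bwt T SA dollar k = bwt T SA dollar (k + 1)) :
    1 < SA k ∧ 1 < SA (k + 1) ∧
    ISA (SA (k + 1) - 1) = ISA (SA k - 1) + 1 :=
  statement4_general n T dollar SA hdollar hSAran hSAmono ISA hISAran k hk1 hk2 heq
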